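/- (Appendix Lemma A.2, bound part) Let Θ ⊆ ℝ^d be open, f, g : Θ → ℝ with g nowhere zero, both p-times differentiable, and suppose there are functions φ, ψ : Θ → [1,∞) with |∂_θ^α f(θ)| ≤ |f(θ)| φ(θ)^{|α|} and |∂_θ^α g(θ)| ≤ ψ(θ) for all θ and all |α| ≤ p. Then there exists K ∈ [1,∞), depending only on d and p, such that the quotient h = f/g satisfies |∂_θ^α h(θ)| ≤ K |f(θ)/g(θ)| ( φ(θ)ψ(θ)/|g(θ)| )^{|α|} for all θ ∈ Θ and all multi-indices α with |α| ≤ p. -/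

import Mathlib

/-- Partial derivative along coordinate `i`. -/
noncomputable def pd {d : ℕ} {F : Type*} [NormedAddCommGroup F] [NormedSpace ℝ F]
    (i : Fin d) (f : (Fin d → ℝ) → F) : (Fin d → ℝ) → F :=
  fun x => fderiv ℝ f x (Pi.single i 1)

/-- Iterated mixed partial derivative along the list of coordinates `L`;
`|α|` corresponds to `L.length`. -/
noncomputable def pdL {d : ℕ} {F : Type*} [NormedAddCommGroup F] [NormedSpace ℝ F]
    (L : List (Fin d)) (f : (Fin d → ℝ) → F) : (Fin d → ℝ) → F :=
  L.foldr pd f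

/-! By induction on `L`, `∂^L (f / g)` is a sum of terms `c · ∂^β f · ∏ⱼ ∂^γⱼ g / g^(k+1)` with
`c ∈ ℤ`, `|β| + ∑ⱼ |γⱼ| = |L|` and `k ≤ |L|`: differentiating such a term along `i` gives the term
with `β` extended by `i`, the term with an extra factor `∂ᵢ g` and coefficient `-(k+1)c`, and `k`
terms with one `γⱼ` extended. Hence the total `∑ |c|` is multiplied by `2k + 2 ≤ 2|L| + 2` at each
step and stays below `2^|L| |L|!`. Since `φ ≥ 1` and `ψ ≥ |g|` (the case `L = []` of the
hypothesis on `g`), each term is at most `|c| |f/g| (φψ/|g|)^|L|`. -/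

variable {d : ℕ} {i : Fin d} {x : Fin d → ℝ}

@[simp]
lemma pdL_cons {F : Type*} [NormedAddCommGroup F] [NormedSpace ℝ F]
    (L : List (Fin d)) (u : (Fin d → ℝ) → F) : pdL (i :: L) u = pd i (pdL L u) := rfl

lemma pd_congr_of_eqOn {F : Type*} [NormedAddCommGroup F] [NormedSpace ℝ F]
    {Θ : Set (Fin d → ℝ)} {u v : (Fin d → ℝ) → F} (hΘ : IsOpen Θ) (h : Set.EqOn u v Θ)
    (hx : x ∈ Θ) : pd i u x = pd i v x := by
  rw [pd, pd, Filter.EventuallyEq.fderiv_eq (Filter.eventuallyEq_of_mem (hΘ.mem_nhds hx) h)]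

lemma hasDerivAt_pd {u : (Fin d → ℝ) → ℝ} (hu : DifferentiableAt ℝ u x) :
    HasDerivAt (fun t : ℝ => u (x + t • Pi.single i 1)) (pd i u x) 0 := by
  refine hu.hasFDerivAt.comp_hasDerivAt_of_eq 0 ?_ (by simp)
  simpa using ((hasDerivAt_id (0 : ℝ)).smul_const (Pi.single i 1 : Fin d → ℝ)).const_add x

lemma pd_mul {u v : (Fin d → ℝ) → ℝ} (hu : DifferentiableAt ℝ u x)
    (hv : DifferentiableAt ℝ v x) :
    pd i (fun y => u y * v y) x = pd i u x * v x + u x * pd i v x := by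
  simp only [pd, fderiv_fun_mul hu hv, add_apply, smul_apply, smul_eq_mul]
  ring

lemma hasFDerivAt_list_sum {ι : Type*} {l : List ι} {u : ι → (Fin d → ℝ) → ℝ}
    (hu : ∀ a ∈ l, DifferentiableAt ℝ (u a) x) :
    HasFDerivAt (fun y => (l.map fun a => u a y).sum) (l.map fun a => fderiv ℝ (u a) x).sum x := by
  induction l with
  | nil => simpa using hasFDerivAt_const (0 : ℝ) x
  | cons a l ih =>
    simp only [List.map_cons, List.sum_cons]
    exact (hu a List.mem_cons_self).hasFDerivAt.add
      (ih fun b hb => hu b (List.mem_cons_of_mem _ hb))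

lemma pd_list_sum {ι : Type*} {l : List ι} {u : ι → (Fin d → ℝ) → ℝ}
    (hu : ∀ a ∈ l, DifferentiableAt ℝ (u a) x) :
    pd i (fun y => (l.map fun a => u a y).sum) x = (l.map fun a => pd i (u a) x).sum := by
  rw [pd, (hasFDerivAt_list_sum hu).fderiv]
  exact map_list_sum (ContinuousLinearMap.apply ℝ ℝ (Pi.single i 1)) _ |>.trans
    (by simp [pd, Function.comp_def])

section Smoothness

variable {F : Type*} [NormedAddCommGroup F] [NormedSpace ℝ F] {Θ : Set (Fin d → ℝ)}
  {u : (Fin d → ℝ) → F}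

lemma contDiffOn_pd {n : ℕ} (hΘ : IsOpen Θ) (hu : ContDiffOn ℝ (n + 1 : ℕ) u Θ) :
    ContDiffOn ℝ n (pd i u) Θ := by
  rw [Nat.cast_add, Nat.cast_one, contDiffOn_succ_iff_fderiv_of_isOpen hΘ] at hu
  exact hu.2.2.clm_apply contDiffOn_const

lemma contDiffOn_pdL (hΘ : IsOpen Θ) :
    ∀ {L : List (Fin d)} {n : ℕ}, ContDiffOn ℝ (n + L.length : ℕ) u Θ →
      ContDiffOn ℝ n (pdL L u) Θ
  | [], _, hu => hu
  | _ :: L, n, hu => contDiffOn_pd hΘ <| contDiffOn_pdL hΘ (L := L) (n := n + 1) <| by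
      rwa [List.length_cons, ← add_assoc, add_right_comm] at hu

lemma differentiableAt_pdL {p : ℕ} {L : List (Fin d)} (hΘ : IsOpen Θ)
    (hu : ContDiffOn ℝ p u Θ) (hL : L.length < p) (hx : x ∈ Θ) :
    DifferentiableAt ℝ (pdL L u) x :=
  ((contDiffOn_pdL hΘ (n := 1) (hu.of_le (by exact_mod_cast (by omega : 1 + L.length ≤ p))))
    |>.differentiableOn one_ne_zero).differentiableAt (hΘ.mem_nhds hx)

end Smoothness

/-- All ways of prepending `a` to exactly one member of `ls`. -/
def List.prependAtEach {α : Type*} (a : α) : List (List α) → List (List (List α))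
  | [] => []
  | l :: ls => ((a :: l) :: ls) :: (List.prependAtEach a ls).map (l :: ·)

namespace List

variable {α : Type*} {a : α}

@[simp]
lemma length_prependAtEach : ∀ ls : List (List α), (ls.prependAtEach a).length = ls.length
  | [] => rfl
  | _ :: ls => by simp [prependAtEach, length_prependAtEach ls]

lemma length_of_mem_prependAtEach :
    ∀ {ls ls' : List (List α)}, ls' ∈ ls.prependAtEach a → ls'.length = ls.length
  | [], _, h => by simp [prependAtEach] at h
  | _ :: _, _, h => by
    simp only [prependAtEach, mem_cons, mem_map] at h
    rcases h with rfl | ⟨_, h, rfl⟩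
    · rfl
    · simp [length_of_mem_prependAtEach h]

lemma sum_length_of_mem_prependAtEach :
    ∀ {ls ls' : List (List α)}, ls' ∈ ls.prependAtEach a →
      (ls'.map length).sum = (ls.map length).sum + 1
  | [], _, h => by simp [prependAtEach] at h
  | _ :: _, _, h => by
    simp only [prependAtEach, mem_cons, mem_map] at h
    rcases h with rfl | ⟨_, h, rfl⟩
    · simp; omega
    · simp [sum_length_of_mem_prependAtEach h]; omega

end List

noncomputable def prodPdL (g : (Fin d → ℝ) → ℝ) (γs : List (List (Fin d))) (y : Fin d → ℝ) : ℝ :=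
  (γs.map fun γ => pdL γ g y).prod

section ProdPdL

variable {g : (Fin d → ℝ) → ℝ}

lemma differentiableAt_prodPdL {γs : List (List (Fin d))}
    (hγs : ∀ γ ∈ γs, DifferentiableAt ℝ (pdL γ g) x) : DifferentiableAt ℝ (prodPdL g γs) x := by
  induction γs with
  | nil => exact differentiableAt_const 1
  | cons γ γs ih =>
    exact (hγs γ List.mem_cons_self).mul (ih fun γ' h => hγs γ' (List.mem_cons_of_mem _ h))

lemma pd_prodPdL {γs : List (List (Fin d))} (hγs : ∀ γ ∈ γs, DifferentiableAt ℝ (pdL γ g) x) :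
    pd i (prodPdL g γs) x = ((γs.prependAtEach i).map (prodPdL g · x)).sum := by
  induction γs with
  | nil => simp [show prodPdL g [] = fun _ => 1 from rfl, pd, List.prependAtEach]
  | cons γ γs ih =>
    have hγs' : ∀ γ' ∈ γs, DifferentiableAt ℝ (pdL γ' g) x :=
      fun γ' h => hγs γ' (List.mem_cons_of_mem _ h)
    change pd i (fun y => pdL γ g y * prodPdL g γs y) x = _
    rw [pd_mul (hγs γ List.mem_cons_self) (differentiableAt_prodPdL hγs'), ih hγs']
    simp [List.prependAtEach, prodPdL, Function.comp_def, List.sum_map_mul_left]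

lemma abs_prodPdL_le {γs : List (List (Fin d))} {b : ℝ} (h : ∀ γ ∈ γs, |pdL γ g x| ≤ b) :
    |prodPdL g γs x| ≤ b ^ γs.length := by
  induction γs with
  | nil => simp [prodPdL]
  | cons γ γs ih =>
    have hγ := h γ List.mem_cons_self
    rw [prodPdL, List.map_cons, List.prod_cons, abs_mul, List.length_cons, pow_succ']
    exact mul_le_mul hγ (ih fun γ' h' => h γ' (List.mem_cons_of_mem _ h')) (abs_nonneg _)
      ((abs_nonneg _).trans hγ)

end ProdPdL

structure QuotientTerm (d : ℕ) where
  coeff : ℤ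
  fDeriv : List (Fin d)
  gDerivs : List (List (Fin d))

namespace QuotientTerm

noncomputable def eval (f g : (Fin d → ℝ) → ℝ) (T : QuotientTerm d) (y : Fin d → ℝ) : ℝ :=
  T.coeff * pdL T.fDeriv f y * prodPdL g T.gDerivs y / g y ^ (T.gDerivs.length + 1)

def derive (i : Fin d) (T : QuotientTerm d) : List (QuotientTerm d) :=
  ⟨T.coeff, i :: T.fDeriv, T.gDerivs⟩ ::
  ⟨-(T.gDerivs.length + 1) * T.coeff, T.fDeriv, [i] :: T.gDerivs⟩ ::
  (T.gDerivs.prependAtEach i).map (⟨T.coeff, T.fDeriv, ·⟩)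

def order (T : QuotientTerm d) : ℕ :=
  T.fDeriv.length + (T.gDerivs.map List.length).sum

lemma length_fDeriv_le_order (T : QuotientTerm d) : T.fDeriv.length ≤ T.order :=
  Nat.le_add_right _ _

lemma length_le_order_of_mem_gDerivs {T : QuotientTerm d} {γ : List (Fin d)}
    (h : γ ∈ T.gDerivs) : γ.length ≤ T.order :=
  (List.le_sum_of_mem (List.mem_map_of_mem h)).trans (Nat.le_add_left _ _)

lemma order_of_mem_derive {T T' : QuotientTerm d} (h : T' ∈ T.derive i) :
    T'.order = T.order + 1 := by
  simp only [derive, List.mem_cons, List.mem_map] at h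
  rcases h with rfl | rfl | ⟨γs, hγs, rfl⟩
  · simp [order]; omega
  · simp [order]; omega
  · simp [order, List.sum_length_of_mem_prependAtEach hγs]; omega

lemma length_gDerivs_le_of_mem_derive {T T' : QuotientTerm d} (h : T' ∈ T.derive i) :
    T'.gDerivs.length ≤ T.gDerivs.length + 1 := by
  simp only [derive, List.mem_cons, List.mem_map] at h
  rcases h with rfl | rfl | ⟨γs, hγs, rfl⟩
  · simp
  · simp
  · simp [List.length_of_mem_prependAtEach hγs]

lemma sum_natAbs_coeff_derive (T : QuotientTerm d) :
    ((T.derive i).map (·.coeff.natAbs)).sum = (2 * T.gDerivs.length + 2) * T.coeff.natAbs := by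
  have hk : (-((T.gDerivs.length : ℤ) + 1)).natAbs = T.gDerivs.length + 1 := by omega
  simp only [derive, List.map_cons, List.map_map, Function.comp_def, List.map_const',
    List.sum_cons, List.sum_replicate, List.length_prependAtEach, Int.natAbs_mul, hk, smul_eq_mul]
  ring

def expansion : List (Fin d) → List (QuotientTerm d)
  | [] => [⟨1, [], []⟩]
  | i :: L => (expansion L).flatMap (derive i)

lemma order_of_mem_expansion :
    ∀ {L : List (Fin d)} {T : QuotientTerm d}, T ∈ expansion L → T.order = L.length
  | [], T, h => by
    rw [expansion, List.mem_singleton] at h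
    simp [h, order]
  | _ :: _, _, h => by
    obtain ⟨T, hT, hT'⟩ := List.mem_flatMap.mp h
    rw [order_of_mem_derive hT', order_of_mem_expansion hT, List.length_cons]

lemma length_gDerivs_le_of_mem_expansion :
    ∀ {L : List (Fin d)} {T : QuotientTerm d}, T ∈ expansion L → T.gDerivs.length ≤ L.length
  | [], T, h => by
    rw [expansion, List.mem_singleton] at h
    simp [h]
  | _ :: _, _, h => by
    obtain ⟨T, hT, hT'⟩ := List.mem_flatMap.mp h
    have := length_gDerivs_le_of_mem_expansion hT
    have := length_gDerivs_le_of_mem_derive hT'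
    simp only [List.length_cons]
    omega

lemma sum_natAbs_coeff_expansion_le :
    ∀ L : List (Fin d), ((expansion L).map (·.coeff.natAbs)).sum ≤ 2 ^ L.length * L.length.factorial
  | [] => by simp [expansion]
  | i :: L => calc
      ((expansion (i :: L)).map (·.coeff.natAbs)).sum
        = ((expansion L).map fun T => (2 * T.gDerivs.length + 2) * T.coeff.natAbs).sum := by
          simp [expansion, List.flatMap_def, List.sum_flatten, Function.comp_def,
            sum_natAbs_coeff_derive]
      _ ≤ ((expansion L).map fun T => (2 * L.length + 2) * T.coeff.natAbs).sum :=
          List.sum_le_sum fun T hT => by gcongr; exact length_gDerivs_le_of_mem_expansion hT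
      _ = (2 * L.length + 2) * ((expansion L).map (·.coeff.natAbs)).sum :=
          List.sum_map_mul_left _ _ _
      _ ≤ (2 * L.length + 2) * (2 ^ L.length * L.length.factorial) := by
          gcongr; exact sum_natAbs_coeff_expansion_le L
      _ = 2 ^ (i :: L).length * (i :: L).length.factorial := by
          simp only [List.length_cons, Nat.factorial_succ, pow_succ]
          ring

section Calculus

variable {f g : (Fin d → ℝ) → ℝ} {T : QuotientTerm d}

lemma differentiableAt_eval (hf : DifferentiableAt ℝ (pdL T.fDeriv f) x)
    (hgs : ∀ γ ∈ T.gDerivs, DifferentiableAt ℝ (pdL γ g) x) (hg : DifferentiableAt ℝ g x)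
    (hgx : g x ≠ 0) : DifferentiableAt ℝ (T.eval f g) x := by
  unfold eval
  simp only [div_eq_mul_inv]
  exact (((differentiableAt_const _).mul hf).mul (differentiableAt_prodPdL hgs)).mul
    ((hg.fun_pow _).inv (pow_ne_zero _ hgx))

lemma pd_eval (hf : DifferentiableAt ℝ (pdL T.fDeriv f) x)
    (hgs : ∀ γ ∈ T.gDerivs, DifferentiableAt ℝ (pdL γ g) x) (hg : DifferentiableAt ℝ g x)
    (hgx : g x ≠ 0) : pd i (T.eval f g) x = ((T.derive i).map (·.eval f g x)).sum := by
  have hq := (((hasDerivAt_pd (i := i) hf).const_mul (T.coeff : ℝ)).mul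
    (hasDerivAt_pd (i := i) (differentiableAt_prodPdL hgs))).div
    ((hasDerivAt_pd (i := i) hg).pow (T.gDerivs.length + 1)) (by simpa using hgx)
  rw [(hasDerivAt_pd (differentiableAt_eval hf hgs hg hgx)).unique hq]
  obtain ⟨c, β, γs⟩ := T
  have hbump : ((γs.prependAtEach i).map fun γs' =>
        (c : ℝ) * pdL β f x * prodPdL g γs' x / g x ^ (γs'.length + 1)).sum
      = c * pdL β f x / g x ^ (γs.length + 1) *
          ((γs.prependAtEach i).map (prodPdL g · x)).sum := by
    rw [← List.sum_map_mul_left]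
    refine congrArg _ (List.map_congr_left fun γs' h => ?_)
    rw [List.length_of_mem_prependAtEach h]
    ring
  have hcons : prodPdL g ([i] :: γs) x = pd i g x * prodPdL g γs x := rfl
  simp only [derive, eval, List.map_cons, List.map_map, Function.comp_def, List.sum_cons, hbump,
    hcons, ← pd_prodPdL hgs, pdL_cons, Pi.mul_apply, Pi.pow_apply, zero_smul, add_zero,
    List.length_cons, Nat.add_sub_cancel]
  field_simp
  push_cast
  ring

lemma abs_eval_le {n : ℕ} {a b : ℝ} (hf : |pdL T.fDeriv f x| ≤ |f x| * a ^ T.fDeriv.length)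
    (hgs : ∀ γ ∈ T.gDerivs, |pdL γ g x| ≤ b) (hgb : |g x| ≤ b) (hgx : g x ≠ 0) (ha : 1 ≤ a)
    (hβ : T.fDeriv.length ≤ n) (hk : T.gDerivs.length ≤ n) :
    |T.eval f g x| ≤ |(T.coeff : ℝ)| * |f x / g x| * (a * b / |g x|) ^ n := by
  have hG : 0 < |g x| := abs_pos.mpr hgx
  have hbG : 1 ≤ b / |g x| := (one_le_div hG).mpr hgb
  calc |T.eval f g x|
      = |(T.coeff : ℝ)| * |pdL T.fDeriv f x| * |prodPdL g T.gDerivs x|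
          / |g x| ^ (T.gDerivs.length + 1) := by
        simp only [eval, abs_div, abs_mul, abs_pow]
    _ ≤ |(T.coeff : ℝ)| * (|f x| * a ^ T.fDeriv.length) * b ^ T.gDerivs.length
          / |g x| ^ (T.gDerivs.length + 1) := by
        gcongr
        exact abs_prodPdL_le hgs
    _ = |(T.coeff : ℝ)| * (|f x| / |g x|) *
          (a ^ T.fDeriv.length * (b / |g x|) ^ T.gDerivs.length) := by
        rw [div_pow]
        field_simp
        ring
    _ ≤ |(T.coeff : ℝ)| * (|f x| / |g x|) * (a ^ n * (b / |g x|) ^ n) := by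
        gcongr
    _ = |(T.coeff : ℝ)| * |f x / g x| * (a * b / |g x|) ^ n := by
        rw [abs_div, mul_div_assoc, mul_pow]

lemma abs_sum_eval_expansion_le {L : List (Fin d)} {a b : ℝ}
    (hf : ∀ β : List (Fin d), β.length ≤ L.length → |pdL β f x| ≤ |f x| * a ^ β.length)
    (hg : ∀ γ : List (Fin d), γ.length ≤ L.length → |pdL γ g x| ≤ b) (hgx : g x ≠ 0)
    (ha : 1 ≤ a) :
    |((expansion L).map (·.eval f g x)).sum|
      ≤ (2 ^ L.length * L.length.factorial : ℕ) * (|f x / g x| * (a * b / |g x|) ^ L.length) := by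
  have hgb : |g x| ≤ b := hg [] (Nat.zero_le _)
  have hB : 0 ≤ |f x / g x| * (a * b / |g x|) ^ L.length := by
    have := (abs_nonneg (g x)).trans hgb
    positivity
  have hterm : ∀ T ∈ expansion L,
      |T.eval f g x| ≤ |(T.coeff : ℝ)| * (|f x / g x| * (a * b / |g x|) ^ L.length) :=
    fun T hT => by
      have horder := order_of_mem_expansion hT
      have hβ := T.length_fDeriv_le_order.trans horder.le
      rw [← mul_assoc]
      exact abs_eval_le (hf _ hβ) (fun γ hγ => hg γ (horder ▸ length_le_order_of_mem_gDerivs hγ))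
        hgb hgx ha hβ (length_gDerivs_le_of_mem_expansion hT)
  calc |((expansion L).map (·.eval f g x)).sum|
      ≤ ((expansion L).map (|·.eval f g x|)).sum := by
        simpa [Function.comp_def] using
          Multiset.abs_sum_le_sum_abs (s := ((expansion L).map (·.eval f g x) : Multiset ℝ))
    _ ≤ ((expansion L).map fun T =>
          |(T.coeff : ℝ)| * (|f x / g x| * (a * b / |g x|) ^ L.length)).sum :=
        List.sum_le_sum hterm
    _ = (((expansion L).map (·.coeff.natAbs)).sum : ℕ) *
          (|f x / g x| * (a * b / |g x|) ^ L.length) := by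
        simp [List.sum_map_mul_right, Nat.cast_list_sum, Function.comp_def, Nat.cast_natAbs]
    _ ≤ _ := by
        gcongr
        exact_mod_cast sum_natAbs_coeff_expansion_le L

end Calculus

end QuotientTerm

open QuotientTerm in
lemma pdL_div_eq_sum_expansion {Θ : Set (Fin d → ℝ)} {p : ℕ} {f g : (Fin d → ℝ) → ℝ}
    (hΘ : IsOpen Θ) (hf : ContDiffOn ℝ p f Θ) (hg : ContDiffOn ℝ p g Θ)
    (hg0 : ∀ y ∈ Θ, g y ≠ 0) :
    ∀ {L : List (Fin d)}, L.length ≤ p → ∀ {x}, x ∈ Θ →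
      pdL L (fun t => f t / g t) x = ((expansion L).map (·.eval f g x)).sum
  | [], _, x, _ => by simp [expansion, eval, prodPdL, pdL]
  | i :: L, hL, x, hx => by
    have hLp : L.length < p := by simp only [List.length_cons] at hL; omega
    have hdiff_f : ∀ T ∈ expansion L, DifferentiableAt ℝ (pdL T.fDeriv f) x := fun T hT =>
      differentiableAt_pdL hΘ hf
        ((T.length_fDeriv_le_order.trans (order_of_mem_expansion hT).le).trans_lt hLp) hx
    have hdiff_g : ∀ T ∈ expansion L, ∀ γ ∈ T.gDerivs, DifferentiableAt ℝ (pdL γ g) x :=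
      fun T hT γ hγ => differentiableAt_pdL hΘ hg
        (((length_le_order_of_mem_gDerivs hγ).trans (order_of_mem_expansion hT).le).trans_lt
          hLp) hx
    have hg' : DifferentiableAt ℝ g x :=
      differentiableAt_pdL (L := []) hΘ hg (Nat.zero_lt_of_lt hLp) hx
    calc pdL (i :: L) (fun t => f t / g t) x
        = pd i (fun y => ((expansion L).map (·.eval f g y)).sum) x :=
          pd_congr_of_eqOn hΘ (fun y hy => pdL_div_eq_sum_expansion hΘ hf hg hg0 hLp.le hy) hx
      _ = ((expansion L).map fun T => pd i (T.eval f g) x).sum :=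
          pd_list_sum fun T hT =>
            differentiableAt_eval (hdiff_f T hT) (hdiff_g T hT) hg' (hg0 x hx)
      _ = ((expansion L).map fun T => ((T.derive i).map (·.eval f g x)).sum).sum :=
          congrArg _ <| List.map_congr_left fun T hT =>
            pd_eval (hdiff_f T hT) (hdiff_g T hT) hg' (hg0 x hx)
      _ = ((expansion (i :: L)).map (·.eval f g x)).sum := by
          simp [expansion, List.flatMap_def, List.sum_flatten, Function.comp_def]

theorem stmt9_general (d p : ℕ) :
    ∃ K : ℝ, 1 ≤ K ∧
      ∀ (Θ : Set (Fin d → ℝ)), IsOpen Θ →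
      ∀ f g φ ψ : (Fin d → ℝ) → ℝ,
        ContDiffOn ℝ p f Θ → ContDiffOn ℝ p g Θ →
        (∀ θ ∈ Θ, g θ ≠ 0) →
        (∀ θ ∈ Θ, 1 ≤ φ θ) → (∀ θ ∈ Θ, 1 ≤ ψ θ) →
        (∀ θ ∈ Θ, ∀ L : List (Fin d), L.length ≤ p →
          |pdL L f θ| ≤ |f θ| * φ θ ^ L.length) →
        (∀ θ ∈ Θ, ∀ L : List (Fin d), L.length ≤ p →
          |pdL L g θ| ≤ ψ θ) →
        ∀ θ ∈ Θ, ∀ L : List (Fin d), L.length ≤ p →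
          |pdL L (fun t => f t / g t) θ| ≤
            K * |f θ / g θ| * (φ θ * ψ θ / |g θ|) ^ L.length := by
  refine ⟨(2 ^ p * p.factorial : ℕ), mod_cast Nat.one_le_iff_ne_zero.mpr (by positivity), ?_⟩
  intro Θ hΘ f g φ ψ hf hg hg0 hφ _ hDf hDg θ hθ L hL
  rw [pdL_div_eq_sum_expansion hΘ hf hg hg0 hL hθ, mul_assoc]
  refine (QuotientTerm.abs_sum_eval_expansion_le (fun β hβ => hDf θ hθ β (hβ.trans hL))
    (fun γ hγ => hDg θ hθ γ (hγ.trans hL)) (hg0 θ hθ) (hφ θ hθ)).trans ?_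
  have hB : 0 ≤ |f θ / g θ| * (φ θ * ψ θ / |g θ|) ^ L.length := by
    have := (abs_nonneg (g θ)).trans (hDg θ hθ [] (Nat.zero_le _))
    have := hφ θ hθ
    positivity
  exact mul_le_mul_of_nonneg_right
    (mod_cast Nat.mul_le_mul (Nat.pow_le_pow_right two_pos hL) (Nat.factorial_le hL)) hB

/-- Appendix Lemma A.2, bound part: there is `K ∈ [1,∞)`,
depending only on `d` and `p`, such that
`|∂^α (f/g)(θ)| ≤ K |f(θ)/g(θ)| (φ(θ)ψ(θ)/|g(θ)|)^{|α|}`. -/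
theorem stmt9 (d p : ℕ) (hp : 1 ≤ p) :
    ∃ K : ℝ, 1 ≤ K ∧
      ∀ (Θ : Set (Fin d → ℝ)), IsOpen Θ →
      ∀ f g φ ψ : (Fin d → ℝ) → ℝ,
        ContDiffOn ℝ p f Θ → ContDiffOn ℝ p g Θ →
        (∀ θ ∈ Θ, g θ ≠ 0) →
        (∀ θ ∈ Θ, 1 ≤ φ θ) → (∀ θ ∈ Θ, 1 ≤ ψ θ) →
        (∀ θ ∈ Θ, ∀ L : List (Fin d), L.length ≤ p →
          |pdL L f θ| ≤ |f θ| * φ θ ^ L.length) →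
        (∀ θ ∈ Θ, ∀ L : List (Fin d), L.length ≤ p →
          |pdL L g θ| ≤ ψ θ) →
        ∀ θ ∈ Θ, ∀ L : List (Fin d), L.length ≤ p →
          |pdL L (fun t => f t / g t) θ| ≤
            K * |f θ / g θ| * (φ θ * ψ θ / |g θ|) ^ L.length :=
  stmt9_general d p
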